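/- Let G be a field, F ⊆ G a subfield, t ∈ G, and v a discrete valuation on G trivial on F with v(t) ≥ 0. Let R(T) = A(T)/B(T) with A(T) = ∏_{i=1}^m (T−c_i)^{n_i}, B(T) = ∏_{i=1}^k (T−b_i)^{j_i}, where c_1,…,c_m,b_1,…,b_k ∈ F are pairwise distinct and the n_i, j_i are positive integers. Let q be a prime number with deg A − deg B ≢ 0 (mod q), and fix a ∈ F. Assume t^q − r + a ∉ F for every r ∈ F (e.g. t transcendental over F). Then the set {r ∈ F : v(R(t^q − r + a)) ≢ 0 (mod q)} is finite (it has at most m + k elements). -/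
import Mathlib


/-- Evaluation of the rational function `R(T) = ∏ (T - cᵢ)^{nᵢ} / ∏ (T - bᵢ)^{jᵢ}`
(with coefficients in a subfield `F`) at a point `x` of a field extension `G` of `F`. -/
noncomputable def ratEval {F G : Type*} [Field F] [Field G] [Algebra F G] {m k : ℕ}
    (c : Fin m → F) (b : Fin k → F) (n : Fin m → ℕ) (j : Fin k → ℕ) (x : G) : G :=
  (∏ i, (x - algebraMap F G (c i)) ^ n i) / (∏ i, (x - algebraMap F G (b i)) ^ j i)

/-- A value in `ℤ ∪ {∞}` is finite and divisible by `q` ("≡ 0 (mod q)"). -/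
def valDvd (q : ℕ) (x : WithTop ℤ) : Prop :=
  ∃ z : ℤ, x = (z : WithTop ℤ) ∧ (q : ℤ) ∣ z

private lemma val_prod_zero {G : Type*} [Field G] (v : AddValuation G (WithTop ℤ))
    {ι : Type*} (s : Finset ι) (f : ι → G) (h : ∀ i ∈ s, v (f i) = 0) :
    v (∏ i ∈ s, f i) = 0 := by
  classical
  induction s using Finset.induction with
  | empty => simp
  | @insert i s hni ih =>
    rw [Finset.prod_insert hni, v.map_mul, h i (Finset.mem_insert_self i s),
      ih (fun i hi => h i (Finset.mem_insert_of_mem hi)), add_zero]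

/-- Let `G` be a field, `F ⊆ G` a subfield, `t ∈ G`, and `v` a discrete
valuation on `G` trivial on `F` with `v(t) ≥ 0`.  Let
`R(T) = ∏ (T - cᵢ)^{nᵢ} / ∏ (T - bᵢ)^{jᵢ}` over `F` as usual, let `q` be a prime with
`deg A - deg B ≢ 0 (mod q)`, and fix `a ∈ F`.  If `t^q - r + a ∉ F` for every `r ∈ F`, then
the set `{r ∈ F : v(R(t^q - r + a)) ≢ 0 (mod q)}` is finite, with at most `m + k`
elements. -/
theorem stmt_15 (F G : Type*) [Field F] [Field G] [Algebra F G]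
    (t : G) (v : AddValuation G (WithTop ℤ))
    (hsurj : ∀ z : ℤ, ∃ x : G, v x = (z : WithTop ℤ))
    (htriv : ∀ c : F, c ≠ 0 → v (algebraMap F G c) = 0)
    (hvt : 0 ≤ v t)
    (m k : ℕ) (c : Fin m → F) (b : Fin k → F) (n : Fin m → ℕ) (j : Fin k → ℕ)
    (hdist : Function.Injective (Sum.elim c b))
    (hn : ∀ i, 0 < n i) (hj : ∀ i, 0 < j i)
    (q : ℕ) (hq : q.Prime)
    (hdeg : ¬ (q : ℤ) ∣ ((∑ i, (n i : ℤ)) - ∑ i, (j i : ℤ)))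
    (a : F)
    (htrans : ∀ r : F,
      t ^ q - algebraMap F G r + algebraMap F G a ∉ Set.range (algebraMap F G)) :
    {r : F | ¬ valDvd q
        (v (ratEval c b n j (t ^ q - algebraMap F G r + algebraMap F G a)))}.Finite ∧
    {r : F | ¬ valDvd q
        (v (ratEval c b n j (t ^ q - algebraMap F G r + algebraMap F G a)))}.ncard ≤ m + k := by
  classical
  set φ := algebraMap F G with hφ
  set d : Fin m ⊕ Fin k → F := Sum.elim c b with hdeq
  -- valuations of elements of F are nonnegative
  have hv0 : ∀ s : F, 0 ≤ v (φ s) := by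
    intro s
    by_cases hs : s = 0
    · rw [hs, map_zero, v.map_zero]; exact le_top
    · rw [htriv s hs]
  have hvtq : (0 : WithTop ℤ) ≤ v (t ^ q) := by
    rw [v.map_pow]; exact nsmul_nonneg hvt q
  have hfac_nonneg : ∀ s : F, 0 ≤ v (t ^ q - φ s) :=
    fun s => v.map_le_sub hvtq (hv0 s)
  -- at most one `s : F` has `v (t^q - s) > 0`
  have hU : ∀ s s' : F, s ≠ s' → 0 < v (t ^ q - φ s) → 0 < v (t ^ q - φ s') → False := by
    intro s s' hne h1 h2
    have hd : φ (s' - s) = (t ^ q - φ s) - (t ^ q - φ s') := by rw [map_sub]; ring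
    have hpos : 0 < v (φ (s' - s)) := by
      rw [hd]; exact lt_of_lt_of_le (lt_min h1 h2) (v.map_sub _ _)
    rw [htriv (s' - s) (sub_ne_zero.mpr (Ne.symm hne))] at hpos
    exact lt_irrefl _ hpos
  have hrw : ∀ (r s : F), t ^ q - φ r + φ a - φ s = t ^ q - φ (r - a + s) := by
    intro r s; rw [map_add, map_sub]; ring
  -- factors are nonzero
  have hfne : ∀ (r s : F), t ^ q - φ r + φ a - φ s ≠ 0 := by
    intro r s h
    exact htrans r ⟨s, (sub_eq_zero.mp h).symm⟩
  -- if no factor has positive valuation, the value is divisible (it is 0)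
  have hmain : ∀ r : F, (∀ i, ¬ 0 < v (t ^ q - φ (r - a + d i))) →
      valDvd q (v (ratEval c b n j (t ^ q - φ r + φ a))) := by
    intro r hr
    have hfac0 : ∀ i : Fin m ⊕ Fin k, v (t ^ q - φ r + φ a - φ (d i)) = 0 := by
      intro i
      rw [hrw]
      exact le_antisymm (not_lt.mp (hr i)) (hfac_nonneg _)
    have hvA : v (∏ i, (t ^ q - φ r + φ a - φ (c i)) ^ n i) = 0 := by
      refine val_prod_zero v _ _ (fun i _ => ?_)
      have h := hfac0 (Sum.inl i)
      simp only [hdeq, Sum.elim_inl] at h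
      rw [v.map_pow, h, smul_zero]
    have hvB : v (∏ i, (t ^ q - φ r + φ a - φ (b i)) ^ j i) = 0 := by
      refine val_prod_zero v _ _ (fun i _ => ?_)
      have h := hfac0 (Sum.inr i)
      simp only [hdeq, Sum.elim_inr] at h
      rw [v.map_pow, h, smul_zero]
    refine ⟨0, ?_, dvd_zero _⟩
    have : v (ratEval c b n j (t ^ q - φ r + φ a)) = 0 := by
      rw [ratEval, v.map_div, hvA, hvB, sub_zero]
    rw [this]; rfl
  set S : Set F := {r : F | ¬ valDvd q
      (v (ratEval c b n j (t ^ q - φ r + φ a)))} with hS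
  have hpick : ∀ r ∈ S, ∃ i : Fin m ⊕ Fin k, 0 < v (t ^ q - φ (r - a + d i)) := by
    intro r hr
    by_contra h
    push_neg at h
    exact hr (hmain r (fun i => not_lt.mpr (h i)))
  -- injection from S into `Fin m ⊕ Fin k`
  have hinj : ∃ g : S → Fin m ⊕ Fin k, Function.Injective g := by
    refine ⟨fun r => (hpick r r.2).choose, ?_⟩
    intro r r' hgr
    have h1 := (hpick r r.2).choose_spec
    have h2 := (hpick r' r'.2).choose_spec
    have hgr' : (hpick r r.2).choose = (hpick r' r'.2).choose := hgr
    rw [hgr'] at h1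
    by_contra hne
    have hne' : (r : F) - a + d (hpick r' r'.2).choose ≠
        (r' : F) - a + d (hpick r' r'.2).choose := fun h =>
      hne (Subtype.ext (sub_left_inj.mp (add_right_cancel h)))
    exact hU _ _ hne' h1 h2
  obtain ⟨g, hg⟩ := hinj
  have hfin : S.Finite := Set.finite_coe_iff.mp (Finite.of_injective g hg)
  refine ⟨hfin, ?_⟩
  have hcard : Nat.card S ≤ Nat.card (Fin m ⊕ Fin k) := Nat.card_le_card_of_injective g hg
  simpa [Nat.card_coe_set_eq, Nat.card_sum] using hcard
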